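/- Let v be a regular interior vertex of a terrain with height 0 (after normalization), and let L be a triangulation of the link of v by d−3 diagonals. If L contains an irregular ear—an ear acb where t(a) and t(b) have the same sign and t(c) has the opposite sign—then either the lower link or the upper link of v consists of the single vertex c. Consequently, L has at most one irregular ear, and since every triangulation of a polygon on d ≥ 4 vertices has at least two ears, L has at least one regular ear. -/

import Mathlib

open Finset

/-- A subset of the cyclic vertex set `ZMod d` is an *arc* if it consists of
consecutive elements. -/
def IsArc (d : ℕ) (S : Set (ZMod d)) : Prop :=
  ∃ a : ZMod d, ∃ n : ℕ, S = {x | ∃ k : ℕ, k < n ∧ x = a + (k : ZMod d)}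

/-- An edge of the polygon with vertex set `ZMod d`. -/
def IsPolygonEdge (d : ℕ) (e : Finset (ZMod d)) : Prop :=
  ∃ i : ZMod d, e = {i, i + 1}

open scoped Classical in
/-- The diagonals used by a set `Tri` of triangles. -/
noncomputable def diagonalsOf (d : ℕ) (Tri : Finset (Finset (ZMod d))) :
    Finset (Finset (ZMod d)) :=
  (Tri.biUnion fun t => t.powersetCard 2).filter fun e => ¬ IsPolygonEdge d e

open scoped Classical in
/-- `Tri` is a (combinatorial) triangulation of the polygon on the `d`
cyclically ordered vertices `ZMod d`. -/
def IsPolygonTriangulation (d : ℕ) (Tri : Finset (Finset (ZMod d))) : Prop :=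
  Tri.card = d - 2 ∧ (∀ t ∈ Tri, t.card = 3) ∧
  (diagonalsOf d Tri).card = d - 3 ∧
  (∀ i : ZMod d, (Tri.filter fun t => ({i, i + 1} : Finset (ZMod d)) ⊆ t).card = 1) ∧
  (∀ e ∈ diagonalsOf d Tri, (Tri.filter fun t => e ⊆ t).card = 2)

/-- The ear `a c b` with `a = i`, `c = i + 1`, `b = i + 2` is *irregular* if the
heights of `a` and `b` have the same sign and the height of `c` the opposite
sign (`f` records the heights of the link vertices relative to the removed
vertex `v`, normalized so that `v` has height `0`). -/
def IrregularEarAt (d : ℕ) (f : ZMod d → ℝ) (i : ZMod d) : Prop :=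
  (0 < f i ∧ 0 < f (i + 2) ∧ f (i + 1) < 0) ∨
  (f i < 0 ∧ f (i + 2) < 0 ∧ 0 < f (i + 1))

/-
An irregular ear `a c b` puts `c` between two neighbours of the opposite sign. Since the
lower and the upper link are arcs of the link cycle, the one containing `c` is `{c}`. Two
different irregular ears would make both the lower and the upper link singletons, which is
impossible on a cycle of length at least 3. So at most one of the (at least two) ears is
irregular.
-/

section

variable {d : ℕ} [NeZero d]

lemma IsArc.eq_singleton {S : Set (ZMod d)} (hS : IsArc d S) {x : ZMod d} (hx : x ∈ S)
    (hpred : x - 1 ∉ S) (hsucc : x + 1 ∉ S) : S = {x} := by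
  obtain ⟨a, n, rfl⟩ := hS
  obtain ⟨k, hkn, rfl⟩ := hx
  have hnd : n < d := by
    by_contra! hdn
    exact hsucc ⟨(a + k + 1 - a).val, (ZMod.val_lt _).trans_le hdn, by simp⟩
  have hk : k = 0 := by
    by_contra hk
    refine hpred ⟨k - 1, by omega, ?_⟩
    rw [Nat.cast_pred (Nat.pos_of_ne_zero hk)]
    ring
  subst hk
  have hn : n = 1 := by
    by_contra hn
    exact hsucc ⟨1, by omega, by simp⟩
  subst hn
  ext y
  simp

variable {f : ZMod d → ℝ}

lemma IrregularEarAt.lower_or_upper_eq_singleton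
    (hlow : IsArc d {j | f j < 0}) (hup : IsArc d {j | 0 < f j}) {i : ZMod d}
    (hi : IrregularEarAt d f i) :
    {j | f j < 0} = {i + 1} ∨ {j | 0 < f j} = {i + 1} := by
  have hsucc : i + 1 + 1 = i + 2 := by ring
  rcases hi with ⟨ha, hb, hc⟩ | ⟨ha, hb, hc⟩
  · left
    refine hlow.eq_singleton hc ?_ ?_ <;>
      simp only [add_sub_cancel_right, hsucc, Set.mem_ofPred_eq, not_lt] <;> linarith
  · right
    refine hup.eq_singleton hc ?_ ?_ <;>
      simp only [add_sub_cancel_right, hsucc, Set.mem_ofPred_eq, not_lt] <;> linarith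

lemma le_two_of_lower_eq_singleton_of_upper_eq_singleton (hnz : ∀ j, f j ≠ 0) {p q : ZMod d}
    (hlow : {j | f j < 0} = {p}) (hup : {j | 0 < f j} = {q}) : d ≤ 2 := by
  have hcover : (univ : Finset (ZMod d)) ⊆ {p, q} := by
    intro j _
    rcases (hnz j).lt_or_gt with hj | hj
    · have : j ∈ ({p} : Set (ZMod d)) := hlow ▸ hj
      simp_all
    · have : j ∈ ({q} : Set (ZMod d)) := hup ▸ hj
      simp_all
  calc d = (univ : Finset (ZMod d)).card := (ZMod.card d).symm
    _ ≤ ({p, q} : Finset (ZMod d)).card := card_le_card hcover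
    _ ≤ 2 := card_le_two

lemma IrregularEarAt.eq (hd : 3 ≤ d) (hnz : ∀ j, f j ≠ 0)
    (hlow : IsArc d {j | f j < 0}) (hup : IsArc d {j | 0 < f j}) {i i' : ZMod d}
    (hi : IrregularEarAt d f i) (hi' : IrregularEarAt d f i') : i = i' := by
  suffices i + 1 = i' + 1 from add_right_cancel this
  rcases hi.lower_or_upper_eq_singleton hlow hup with h | h <;>
    rcases hi'.lower_or_upper_eq_singleton hlow hup with h' | h'
  · exact Set.singleton_eq_singleton_iff.1 (h.symm.trans h')
  · exact absurd (le_two_of_lower_eq_singleton_of_upper_eq_singleton hnz h h') (by omega)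
  · exact absurd (le_two_of_lower_eq_singleton_of_upper_eq_singleton hnz h' h) (by omega)
  · exact Set.singleton_eq_singleton_iff.1 (h.symm.trans h')

end

open scoped Classical in
theorem irregular_ear_unique_and_regular_ear_exists_general
    (d : ℕ) [NeZero d] (hd : 4 ≤ d)
    (f : ZMod d → ℝ) (hnz : ∀ i, f i ≠ 0)
    -- `v` is regular: lower and upper link are nonempty arcs of the cycle
    (hlow : ({i : ZMod d | f i < 0}).Nonempty ∧ IsArc d {i : ZMod d | f i < 0})
    (hup : ({i : ZMod d | 0 < f i}).Nonempty ∧ IsArc d {i : ZMod d | 0 < f i})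
    (Tri : Finset (Finset (ZMod d)))
    -- the two-ears theorem for polygon triangulations
    (hEars : 2 ≤ (Tri.filter fun t => ∃ i : ZMod d, t = {i, i + 1, i + 2}).card) :
    (∀ i : ZMod d, ({i, i + 1, i + 2} : Finset (ZMod d)) ∈ Tri → IrregularEarAt d f i →
      ({j : ZMod d | f j < 0} = {i + 1} ∨ {j : ZMod d | 0 < f j} = {i + 1})) ∧
    (Tri.filter fun t => ∃ i : ZMod d, t = {i, i + 1, i + 2} ∧ IrregularEarAt d f i).card ≤ 1 ∧
    (∃ t ∈ Tri, ∃ i : ZMod d, t = {i, i + 1, i + 2} ∧ ¬ IrregularEarAt d f i) := by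
  have hIrregular : (Tri.filter fun t => ∃ i : ZMod d,
      t = {i, i + 1, i + 2} ∧ IrregularEarAt d f i).card ≤ 1 := by
    refine card_le_one.2 fun t ht t' ht' => ?_
    obtain ⟨-, i, rfl, hi⟩ := mem_filter.1 ht
    obtain ⟨-, i', rfl, hi'⟩ := mem_filter.1 ht'
    rw [hi.eq (by omega) hnz hlow.2 hup.2 hi']
  refine ⟨fun i _ hi => hi.lower_or_upper_eq_singleton hlow.2 hup.2, hIrregular, ?_⟩
  obtain ⟨t, hEar, hRegular⟩ := exists_mem_notMem_of_card_lt_card (hIrregular.trans_lt hEars)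
  obtain ⟨ht, i, rfl⟩ := mem_filter.1 hEar
  exact ⟨_, ht, i, rfl, fun hi => hRegular (mem_filter.2 ⟨ht, i, rfl, hi⟩)⟩

open scoped Classical in
/-- **Irregular ears of a link triangulation.**
Let `v` be a regular interior vertex of height `0` whose link is the cycle
`ZMod d` with (nonzero) relative heights `f`, and let `Tri` be a triangulation
of the link polygon.  If `Tri` contains an irregular ear `a c b`
(`a = i`, `c = i + 1`, `b = i + 2`), then the lower or the upper link of `v`
consists of the single vertex `c`.  Consequently `Tri` contains at most one
irregular ear and — since every triangulation of a polygon on `d ≥ 4` vertices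
has at least two ears — at least one regular ear. -/
theorem irregular_ear_unique_and_regular_ear_exists
    (d : ℕ) [NeZero d] (hd : 4 ≤ d)
    (f : ZMod d → ℝ) (hnz : ∀ i, f i ≠ 0)
    -- `v` is regular: lower and upper link are nonempty arcs of the cycle
    (hlow : ({i : ZMod d | f i < 0}).Nonempty ∧ IsArc d {i : ZMod d | f i < 0})
    (hup : ({i : ZMod d | 0 < f i}).Nonempty ∧ IsArc d {i : ZMod d | 0 < f i})
    (Tri : Finset (Finset (ZMod d))) (hTri : IsPolygonTriangulation d Tri)
    -- the two-ears theorem for polygon triangulations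
    (hEars : 2 ≤ (Tri.filter fun t => ∃ i : ZMod d, t = {i, i + 1, i + 2}).card) :
    (∀ i : ZMod d, ({i, i + 1, i + 2} : Finset (ZMod d)) ∈ Tri → IrregularEarAt d f i →
      ({j : ZMod d | f j < 0} = {i + 1} ∨ {j : ZMod d | 0 < f j} = {i + 1})) ∧
    (Tri.filter fun t => ∃ i : ZMod d, t = {i, i + 1, i + 2} ∧ IrregularEarAt d f i).card ≤ 1 ∧
    (∃ t ∈ Tri, ∃ i : ZMod d, t = {i, i + 1, i + 2} ∧ ¬ IrregularEarAt d f i) :=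
  irregular_ear_unique_and_regular_ear_exists_general d hd f hnz hlow hup Tri hEars
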